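/- Let k₁, k₂, k₃ > 0 and define on ℝ³ the composite Lyapunov function V(ρ,δ,γ) = √(1 + k₁ρ²) + √(1 + δ² + k₃(γ + (1/2)arctan(2k₂δ))²) − 2. Define ν₁ = −(∂V/∂ρ) ρ cos γ + (∂V/∂δ + ∂V/∂γ) sin γ and ν₂ = −∂V/∂γ. Then: (i) V(0,0,0) = 0 and V(ρ,δ,γ) > 0 for every (ρ,δ,γ) ≠ (0,0,0); and (ii) for every (ρ,δ,γ) with ρ ≥ 0, if ν₁(ρ,δ,γ) = 0 and ν₂(ρ,δ,γ) = 0, then ρ = 0, δ = 0 and γ = 0. (This is the strictness property making V a strict control Lyapunov function for the driftless polar unicycle with respect to the inputs (v/ρ, ω).) -/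

import Mathlib

/-!
On the set `ν₂ = 0` the shifted angle `γ + ½ arctan (2 k₂ δ)` vanishes, so `γ = -½ arctan (2 k₂ δ)`
lies in `(-π/4, π/4)` and has the sign opposite to `δ`. There
`ν₁ = -k₁ ρ² cos γ / √(1 + k₁ ρ²) + δ sin γ / √(1 + δ²)` is a sum of two nonpositive terms, the
second one negative unless `δ = 0`; hence `δ = 0`, then `γ = 0` and `ρ = 0`.
-/

noncomputable section

open Real

/-- The composite Lyapunov function of Corollary 1. -/
def Vcomp (k₁ k₂ k₃ ρ δ γ : ℝ) : ℝ :=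
  Real.sqrt (1 + k₁ * ρ ^ 2)
    + Real.sqrt (1 + (δ ^ 2 + k₃ * (γ + (1 / 2) * Real.arctan (2 * k₂ * δ)) ^ 2))
    - 2

/-- ν₁ = −(∂V/∂ρ) ρ cos γ + (∂V/∂δ + ∂V/∂γ) sin γ, with the partial derivatives
of `Vcomp` expressed via `deriv` of its one-variable sections. -/
def nu₁comp (k₁ k₂ k₃ ρ δ γ : ℝ) : ℝ :=
  -(deriv (fun r => Vcomp k₁ k₂ k₃ r δ γ) ρ) * ρ * Real.cos γ
    + (deriv (fun d => Vcomp k₁ k₂ k₃ ρ d γ) δ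
        + deriv (fun g => Vcomp k₁ k₂ k₃ ρ δ g) γ) * Real.sin γ

/-- ν₂ = −∂V/∂γ. -/
def nu₂comp (k₁ k₂ k₃ ρ δ γ : ℝ) : ℝ :=
  -(deriv (fun g => Vcomp k₁ k₂ k₃ ρ δ g) γ)

theorem sqrt_one_add_sub_one_pos {a : ℝ} (ha : 0 < a) : 0 < √(1 + a) - 1 := by
  have : 1 < √(1 + a) := Real.lt_sqrt_of_sq_lt (by linarith)
  linarith

theorem sqrt_one_add_sub_one_nonneg {a : ℝ} (ha : 0 ≤ a) : 0 ≤ √(1 + a) - 1 := by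
  have : 1 ≤ √(1 + a) := Real.one_le_sqrt.mpr (by linarith)
  linarith

theorem HasDerivAt.sqrt_one_add {f : ℝ → ℝ} {f' x : ℝ} (hf : HasDerivAt f f' x)
    (hx : 0 ≤ f x) : HasDerivAt (fun y => √(1 + f y)) (f' / (2 * √(1 + f x))) x :=
  (hf.const_add 1).sqrt (by positivity)

theorem Real.mul_sin_half_arctan_mul_pos {c x : ℝ} (hc : 0 < c) (hx : x ≠ 0) :
    0 < x * sin (arctan (c * x) / 2) := by
  have := arctan_lt_pi_div_two (c * x)
  have := neg_pi_div_two_lt_arctan (c * x)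
  rcases hx.lt_or_gt with hx | hx
  · have : arctan (c * x) < 0 := arctan_lt_zero.mpr (mul_neg_of_pos_of_neg hc hx)
    exact mul_pos_of_neg_of_neg hx (sin_neg_of_neg_of_neg_pi_lt (by linarith) (by linarith))
  · have : 0 < arctan (c * x) := arctan_pos.mpr (mul_pos hc hx)
    exact mul_pos hx (sin_pos_of_pos_of_lt_pi (by linarith) (by linarith))

theorem Real.cos_half_arctan_pos (x : ℝ) : 0 < cos (arctan x / 2) := by
  have := arctan_lt_pi_div_two x
  have := neg_pi_div_two_lt_arctan x
  exact cos_pos_of_mem_Ioo ⟨by linarith, by linarith⟩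

section Vcomp

variable {k₁ k₂ k₃ : ℝ}

theorem Vcomp_zero : Vcomp k₁ k₂ k₃ 0 0 0 = 0 := by
  norm_num [Vcomp]

theorem Vcomp_pos (hk₁ : 0 < k₁) (hk₃ : 0 < k₃) {ρ δ γ : ℝ} (h : (ρ, δ, γ) ≠ (0, 0, 0)) :
    0 < Vcomp k₁ k₂ k₃ ρ δ γ := by
  set w := γ + 1 / 2 * arctan (2 * k₂ * δ)
  have hV : Vcomp k₁ k₂ k₃ ρ δ γ
      = (√(1 + k₁ * ρ ^ 2) - 1) + (√(1 + (δ ^ 2 + k₃ * w ^ 2)) - 1) := by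
    rw [Vcomp]; ring
  rw [hV]
  by_cases hρ : ρ = 0
  · have hδw : 0 < δ ^ 2 + k₃ * w ^ 2 := by
      by_cases hδ : δ = 0
      · have hγ : γ ≠ 0 := by rintro rfl; simp_all
        have hw : w = γ := by simp [w, hδ]
        simpa [hδ, hw] using mul_pos hk₃ (sq_pos_of_ne_zero hγ)
      · positivity
    linarith [sqrt_one_add_sub_one_nonneg (by positivity : 0 ≤ k₁ * ρ ^ 2),
      sqrt_one_add_sub_one_pos hδw]
  · linarith [sqrt_one_add_sub_one_pos (by positivity : 0 < k₁ * ρ ^ 2),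
      sqrt_one_add_sub_one_nonneg (by positivity : 0 ≤ δ ^ 2 + k₃ * w ^ 2)]

theorem hasDerivAt_Vcomp_rho (hk₁ : 0 ≤ k₁) (ρ δ γ : ℝ) :
    HasDerivAt (fun r => Vcomp k₁ k₂ k₃ r δ γ) (k₁ * ρ / √(1 + k₁ * ρ ^ 2)) ρ := by
  have h := (((hasDerivAt_pow 2 ρ).const_mul k₁).sqrt_one_add (by positivity)).add_const
    (√(1 + (δ ^ 2 + k₃ * (γ + 1 / 2 * arctan (2 * k₂ * δ)) ^ 2))) |>.sub_const 2
  exact h.congr_deriv (by norm_num; field_simp)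

theorem hasDerivAt_Vcomp_gamma (hk₃ : 0 ≤ k₃) (ρ δ γ : ℝ) :
    HasDerivAt (fun g => Vcomp k₁ k₂ k₃ ρ δ g)
      (k₃ * (γ + 1 / 2 * arctan (2 * k₂ * δ))
        / √(1 + (δ ^ 2 + k₃ * (γ + 1 / 2 * arctan (2 * k₂ * δ)) ^ 2))) γ := by
  have hw := (((hasDerivAt_id' γ).add_const (1 / 2 * arctan (2 * k₂ * δ))).fun_pow 2).const_mul k₃
  have h := (((hw.const_add (δ ^ 2)).sqrt_one_add (by positivity)).const_add
    (√(1 + k₁ * ρ ^ 2))).sub_const 2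
  exact h.congr_deriv (by norm_num; field_simp)

theorem hasDerivAt_Vcomp_delta (hk₃ : 0 ≤ k₃) (ρ δ γ : ℝ) :
    HasDerivAt (fun d => Vcomp k₁ k₂ k₃ ρ d γ)
      ((δ + k₂ * k₃ * (γ + 1 / 2 * arctan (2 * k₂ * δ)) / (1 + (2 * k₂ * δ) ^ 2))
        / √(1 + (δ ^ 2 + k₃ * (γ + 1 / 2 * arctan (2 * k₂ * δ)) ^ 2))) δ := by
  have harctan := ((hasDerivAt_id' δ).const_mul (2 * k₂)).arctan
  have hw := (((harctan.const_mul (1 / 2)).const_add γ).fun_pow 2).const_mul k₃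
  have h := ((((hasDerivAt_pow 2 δ).fun_add hw).sqrt_one_add (by positivity)).const_add
    (√(1 + k₁ * ρ ^ 2))).sub_const 2
  exact h.congr_deriv (by field_simp; ring)

theorem nu₂comp_eq_zero_iff (hk₃ : 0 < k₃) {ρ δ γ : ℝ} :
    nu₂comp k₁ k₂ k₃ ρ δ γ = 0 ↔ γ = -(1 / 2 * arctan (2 * k₂ * δ)) := by
  have hS : 0 < √(1 + (δ ^ 2 + k₃ * (γ + 1 / 2 * arctan (2 * k₂ * δ)) ^ 2)) :=
    Real.sqrt_pos.mpr (by positivity)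
  rw [nu₂comp, (hasDerivAt_Vcomp_gamma hk₃.le ρ δ γ).deriv, neg_eq_zero, div_eq_zero_iff,
    or_iff_left hS.ne', mul_eq_zero, or_iff_right hk₃.ne', add_eq_zero_iff_eq_neg]

theorem nu₁comp_neg_half_arctan (hk₁ : 0 ≤ k₁) (hk₃ : 0 ≤ k₃) (ρ δ : ℝ) :
    nu₁comp k₁ k₂ k₃ ρ δ (-(1 / 2 * arctan (2 * k₂ * δ)))
      = -(k₁ * ρ ^ 2 * cos (arctan (2 * k₂ * δ) / 2) / √(1 + k₁ * ρ ^ 2))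
        - δ * sin (arctan (2 * k₂ * δ) / 2) / √(1 + δ ^ 2) := by
  rw [nu₁comp, (hasDerivAt_Vcomp_rho hk₁ ..).deriv, (hasDerivAt_Vcomp_delta hk₃ ..).deriv,
    (hasDerivAt_Vcomp_gamma hk₃ ..).deriv]
  simp only [neg_add_cancel, cos_neg, sin_neg]
  ring_nf

theorem eq_zero_of_nu₁comp_eq_zero_of_nu₂comp_eq_zero (hk₁ : 0 < k₁) (hk₂ : 0 < k₂)
    (hk₃ : 0 < k₃) {ρ δ γ : ℝ} (h₁ : nu₁comp k₁ k₂ k₃ ρ δ γ = 0)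
    (h₂ : nu₂comp k₁ k₂ k₃ ρ δ γ = 0) : ρ = 0 ∧ δ = 0 ∧ γ = 0 := by
  obtain rfl := (nu₂comp_eq_zero_iff hk₃).1 h₂
  rw [nu₁comp_neg_half_arctan hk₁.le hk₃.le] at h₁
  set θ := arctan (2 * k₂ * δ) / 2
  have hcos : 0 < cos θ := cos_half_arctan_pos _
  have hρ_term : 0 ≤ k₁ * ρ ^ 2 * cos θ / √(1 + k₁ * ρ ^ 2) := by positivity
  have hδ : δ = 0 := by
    by_contra hδ
    have : 0 < δ * sin θ / √(1 + δ ^ 2) :=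
      div_pos (mul_sin_half_arctan_mul_pos (by positivity) hδ) (by positivity)
    linarith
  subst hδ
  have hA : 0 < √(1 + k₁ * ρ ^ 2) := by positivity
  refine ⟨?_, rfl, by simp⟩
  simpa [θ, hA.ne', hk₁.ne'] using h₁

end Vcomp

theorem composite_CLF_strict
    (k₁ k₂ k₃ : ℝ) (hk₁ : 0 < k₁) (hk₂ : 0 < k₂) (hk₃ : 0 < k₃) :
    (Vcomp k₁ k₂ k₃ 0 0 0 = 0
      ∧ ∀ ρ δ γ : ℝ, (ρ, δ, γ) ≠ ((0 : ℝ), (0 : ℝ), (0 : ℝ)) →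
          0 < Vcomp k₁ k₂ k₃ ρ δ γ)
    ∧ ∀ ρ δ γ : ℝ, 0 ≤ ρ →
        nu₁comp k₁ k₂ k₃ ρ δ γ = 0 → nu₂comp k₁ k₂ k₃ ρ δ γ = 0 →
        ρ = 0 ∧ δ = 0 ∧ γ = 0 :=
  ⟨⟨Vcomp_zero, fun _ _ _ h => Vcomp_pos hk₁ hk₃ h⟩,
    fun _ _ _ _ => eq_zero_of_nu₁comp_eq_zero_of_nu₂comp_eq_zero hk₁ hk₂ hk₃⟩

end
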